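/- arXiv:2211.08908 — 3 statements merged into one kernel-verified Lean document; each statement's English description precedes it below -/
import Mathlib

section
/- For all positive reals a, b, the quantity λ₂ = (a⁴/2)·(a⁴ + (1+b²)² + √((a⁴+(1+b²)²)² + 4a⁴(1+3b²)(b²-1))) is a real number, i.e., the discriminant (a⁴+(1+b²)²)² + 4a⁴(1+3b²)(b²-1) is nonnegative. -/
theorem discriminant_nonneg (a b : ℝ) (ha : 0 < a) (hb : 0 < b) :
    0 ≤ (a ^ 4 + (1 + b ^ 2) ^ 2) ^ 2 + 4 * a ^ 4 * (1 + 3 * b ^ 2) * (b ^ 2 - 1) := by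
  rcases le_or_gt (b ^ 2) 1 with h | h
  · nlinarith [sq_nonneg (a ^ 4 + 7 * b ^ 4 - 2 * b ^ 2 - 1), sq_nonneg b, sq_nonneg (b * b),
      mul_nonneg (mul_nonneg (sq_nonneg (b ^ 2)) (by positivity : (0:ℝ) ≤ 1 + 3 * b ^ 2)) (sub_nonneg.2 h)]
  · nlinarith [pow_pos ha 4, sq_nonneg (1 + b ^ 2), mul_pos (pow_pos ha 4)
      (by nlinarith : (0:ℝ) < 14 * b ^ 4 - 4 * b ^ 2 - 2), sq_nonneg ((1 + b ^ 2) ^ 2)]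
end

section
/- For all positive reals a, b, the largest eigenvalue of the 5×5 matrix A = [[a⁴, a⁴b², a⁴b⁴, a⁴b², a⁶b²],[a⁴b², a⁴, a⁴b², a⁴b⁴, a⁶b²],[a⁴b⁴, a⁴b², a⁴, a⁴b², a⁶b²],[a⁴b², a⁴b⁴, a⁴b², a⁴, a⁶b²],[a⁶b², a⁶b², a⁶b², a⁶b², a⁸]] equals (a⁴/2)·(a⁴ + (1+b²)² + √((a⁴+(1+b²)²)² + 4a⁴(1+3b²)(b²-1))). -/
open Polynomial

/-- The transfer matrix of the restricted `S₃(123)` 1D 3-permaspin model. -/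
noncomputable def A5 (a b : ℝ) : Matrix (Fin 5) (Fin 5) ℝ :=
  !![a^4,     a^4*b^2, a^4*b^4, a^4*b^2, a^6*b^2;
     a^4*b^2, a^4,     a^4*b^2, a^4*b^4, a^6*b^2;
     a^4*b^4, a^4*b^2, a^4,     a^4*b^2, a^6*b^2;
     a^4*b^2, a^4*b^4, a^4*b^2, a^4,     a^6*b^2;
     a^6*b^2, a^6*b^2, a^6*b^2, a^6*b^2, a^8]

lemma charpoly_eval5 (M : Matrix (Fin 5) (Fin 5) ℝ) (μ : ℝ) :
    M.charpoly.eval μ = (Matrix.diagonal (fun _ => μ) - M).det := by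
  rw [Matrix.charpoly, Polynomial.eval, ← Polynomial.coe_eval₂RingHom, RingHom.map_det]
  congr 1
  ext i j
  by_cases h : i = j <;>
    simp [Matrix.charmatrix_apply, Matrix.diagonal, h]

set_option maxHeartbeats 2000000 in
lemma det5 (μ c d e f g : ℝ) :
    (Matrix.diagonal (fun _ => μ) -
      !![c, d, e, d, f; d, c, d, e, f; e, d, c, d, f; d, e, d, c, f; f, f, f, f, g]).det =
    (μ - (c - e)) ^ 2 * (μ - (c - 2*d + e)) *
      ((μ - g) * (μ - (c + 2*d + e)) - 4 * f^2) := by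
  have : (Matrix.diagonal (fun _ => μ) -
      !![c, d, e, d, f; d, c, d, e, f; e, d, c, d, f; d, e, d, c, f; f, f, f, f, g]) =
      !![μ-c, -d, -e, -d, -f; -d, μ-c, -d, -e, -f; -e, -d, μ-c, -d, -f;
         -d, -e, -d, μ-c, -f; -f, -f, -f, -f, μ-g] := by
    ext i j
    fin_cases i <;> fin_cases j <;>
      simp [Matrix.diagonal]
  rw [this]
  rw [Matrix.det_succ_row_zero]
  simp only [Fin.sum_univ_five, Matrix.det_succ_row_zero (n := 3), Fin.sum_univ_four, Matrix.det_fin_three]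
  simp [Matrix.submatrix_apply, Fin.succAbove, Fin.lt_def, -Fin.val_fin_lt]
  ring

set_option maxHeartbeats 1000000 in
/-- The largest eigenvalue (root of the characteristic polynomial) of `A5 a b`
is `λ₂ = (a⁴/2)(a⁴ + (1+b²)² + √((a⁴+(1+b²)²)² + 4a⁴(1+3b²)(b²-1)))`. -/
theorem largest_eigenvalue_A5 (a b : ℝ) (ha : 0 < a) (hb : 0 < b) :
    IsGreatest {μ : ℝ | (A5 a b).charpoly.IsRoot μ}
      (a ^ 4 / 2 * (a ^ 4 + (1 + b ^ 2) ^ 2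
        + Real.sqrt ((a ^ 4 + (1 + b ^ 2) ^ 2) ^ 2
            + 4 * a ^ 4 * (1 + 3 * b ^ 2) * (b ^ 2 - 1)))) := by
  have hD0 : 0 ≤ (a ^ 4 + (1 + b ^ 2) ^ 2) ^ 2 + 4 * a ^ 4 * (1 + 3 * b ^ 2) * (b ^ 2 - 1) := by
    nlinarith [sq_nonneg (a ^ 4 - (1 + b ^ 2) ^ 2), sq_nonneg (a ^ 2 * b ^ 2)]
  set s : ℝ := Real.sqrt ((a ^ 4 + (1 + b ^ 2) ^ 2) ^ 2
      + 4 * a ^ 4 * (1 + 3 * b ^ 2) * (b ^ 2 - 1)) with hsdef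
  have hs0 : 0 ≤ s := Real.sqrt_nonneg _
  have hs2 : s ^ 2 = (a ^ 4 + (1 + b ^ 2) ^ 2) ^ 2
      + 4 * a ^ 4 * (1 + 3 * b ^ 2) * (b ^ 2 - 1) := Real.sq_sqrt hD0
  set L : ℝ := a ^ 4 / 2 * (a ^ 4 + (1 + b ^ 2) ^ 2 + s) with hLdef
  have ha4 : (0:ℝ) < a ^ 4 := by positivity
  have hquad : ∀ μ : ℝ, (μ - a^8) * (μ - (a^4 + 2*(a^4*b^2) + a^4*b^4)) - 4*(a^6*b^2)^2
      = (μ - L) * (μ - (a^4*(a^4+(1+b^2)^2) - L)) := by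
    intro μ
    rw [hLdef]
    linear_combination (a^8/4) * hs2
  have key : ∀ μ : ℝ, (A5 a b).charpoly.IsRoot μ ↔
      (μ - (a^4 - a^4*b^4)) ^ 2 * (μ - (a^4 - 2*(a^4*b^2) + a^4*b^4)) *
        ((μ - L) * (μ - (a^4*(a^4+(1+b^2)^2) - L))) = 0 := by
    intro μ
    rw [Polynomial.IsRoot, charpoly_eval5, A5, det5, ← hquad μ]
  have hsge : (1 + b ^ 2) ^ 2 - a ^ 4 ≤ s := by
    nlinarith [hs2, hs0, sq_nonneg (s + (1 + b ^ 2) ^ 2 - a ^ 4), sq_nonneg (a ^ 2 * b ^ 2)]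
  have hL1 : a ^ 4 * (1 + b ^ 2) ^ 2 ≤ L := by
    rw [hLdef]; nlinarith [hsge, ha4]
  constructor
  · show (A5 a b).charpoly.IsRoot L
    rw [key L]
    ring
  · intro μ hμ
    rw [Set.mem_setOf_eq, key μ] at hμ
    rcases mul_eq_zero.mp hμ with h | h
    · rcases mul_eq_zero.mp h with h | h
      · have : μ = a^4 - a^4*b^4 := by
          have := pow_eq_zero_iff (n := 2) (by norm_num) |>.mp h
          linarith [sub_eq_zero.mp this]
        have h2 : a^4 - a^4*b^4 ≤ a^4*(1+b^2)^2 := by nlinarith [ha4, sq_nonneg b, sq_nonneg (b^2)]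
        rw [this]; linarith [hL1, h2]
      · have : μ = a^4 - 2*(a^4*b^2) + a^4*b^4 := by linarith [sub_eq_zero.mp h]
        have h2 : a^4 - 2*(a^4*b^2) + a^4*b^4 ≤ a^4*(1+b^2)^2 := by nlinarith [ha4, sq_nonneg b]
        rw [this]; linarith [hL1, h2]
    · rcases mul_eq_zero.mp h with h | h
      · have : μ = L := by linarith [sub_eq_zero.mp h]
        rw [this]
      · have : μ = a^4*(a^4+(1+b^2)^2) - L := by linarith [sub_eq_zero.mp h]
        have h2 : a^4*(a^4+(1+b^2)^2) - L ≤ L := by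
          rw [hLdef]; nlinarith [hs0, ha4]
        rw [this]; exact h2
end

section
/- For positive reals c and d, the cubic polynomial t(λ) = λ³ - (cd² + c² + 2cd + c + 1)λ² - c(cd³ + 3c²d + cd² + c² + cd + c + 3d + 1)(d-1)λ + (d² + 4d + 1)c³(d+1)(d-1)³ has three real roots. -/
set_option maxHeartbeats 2000000

/-- Every monic real cubic has a real root. -/
lemma cubic_has_real_root (A B C : ℝ) : ∃ r : ℝ, r ^ 3 + A * r ^ 2 + B * r + C = 0 := by
  set M : ℝ := 1 + |A| + |B| + |C| with hM
  have hA1 := abs_nonneg A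
  have hB1 := abs_nonneg B
  have hC1 := abs_nonneg C
  have hM1 : 1 ≤ M := by simp only [hM]; linarith
  have hMM : M ≤ M ^ 2 := by nlinarith
  have hcont : ContinuousOn (fun x : ℝ => x ^ 3 + A * x ^ 2 + B * x + C)
      (Set.Icc (-M) M) := by fun_prop
  have key := intermediate_value_Icc (by linarith : -M ≤ M) hcont
  have h1 : (-M) ^ 3 + A * (-M) ^ 2 + B * (-M) + C ≤ 0 := by
    nlinarith [le_abs_self A, neg_abs_le A, le_abs_self B, neg_abs_le B,
      le_abs_self C, neg_abs_le C, sq_nonneg M,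
      mul_le_mul_of_nonneg_right (le_abs_self A) (sq_nonneg M),
      mul_le_mul_of_nonneg_left hMM hB1]
  have h2 : (0 : ℝ) ≤ M ^ 3 + A * M ^ 2 + B * M + C := by
    nlinarith [neg_abs_le A, neg_abs_le B, neg_abs_le C, sq_nonneg M,
      mul_le_mul_of_nonneg_right (neg_abs_le A) (sq_nonneg M),
      mul_le_mul_of_nonneg_left hMM hB1]
  obtain ⟨r, _, hr⟩ := key ⟨h1, h2⟩
  exact ⟨r, hr⟩

theorem cubic_three_real_roots (c d : ℝ) (hc : 0 < c) (hd : 0 < d) :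
    ∃ r₁ r₂ r₃ : ℝ, ∀ x : ℝ,
      x ^ 3 - (c * d ^ 2 + c ^ 2 + 2 * c * d + c + 1) * x ^ 2
          - c * (c * d ^ 3 + 3 * c ^ 2 * d + c * d ^ 2 + c ^ 2 + c * d + c + 3 * d + 1)
              * (d - 1) * x
          + (d ^ 2 + 4 * d + 1) * c ^ 3 * (d + 1) * (d - 1) ^ 3
        = (x - r₁) * (x - r₂) * (x - r₃) := by
  obtain ⟨A, hA⟩ : ∃ A : ℝ, A = -(c * d ^ 2 + c ^ 2 + 2 * c * d + c + 1) := ⟨_, rfl⟩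
  obtain ⟨B, hB⟩ : ∃ B : ℝ, B =
      -(c * (c * d ^ 3 + 3 * c ^ 2 * d + c * d ^ 2 + c ^ 2 + c * d + c + 3 * d + 1) * (d - 1)) :=
    ⟨_, rfl⟩
  obtain ⟨C, hC⟩ : ∃ C : ℝ, C = (d ^ 2 + 4 * d + 1) * c ^ 3 * (d + 1) * (d - 1) ^ 3 := ⟨_, rfl⟩
  obtain ⟨r, hr⟩ := cubic_has_real_root A B C
  -- square roots of c and d, to make all powers even in the discriminant certificate
  have ha : Real.sqrt c ^ 2 = c := Real.sq_sqrt hc.le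
  have hb : Real.sqrt d ^ 2 = d := Real.sq_sqrt hd.le
  set a : ℝ := Real.sqrt c
  set b : ℝ := Real.sqrt d
  -- the cubic discriminant is nonnegative
  have hΔ : 0 ≤ 18 * A * B * C - 4 * A ^ 3 * C + A ^ 2 * B ^ 2 - 4 * B ^ 3 - 27 * C ^ 2 := by
    have key : 18 * A * B * C - 4 * A ^ 3 * C + A ^ 2 * B ^ 2 - 4 * B ^ 3 - 27 * C ^ 2
        = a ^ 4 * (b ^ 2 - 1) ^ 2 *
          ( a ^ 8 * (2304 * b ^ 12 + 2304 * b ^ 14 + 576 * b ^ 16)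
          + ((a ^ 2 - 1) ^ 2) * a ^ 6 *
              (1472 * b ^ 8 + 1600 * b ^ 10 + 1440 * b ^ 12 + 544 * b ^ 14 + 128 * b ^ 16)
          + ((a ^ 2 - 1) ^ 2) ^ 2 * a ^ 4 *
              (64 * b ^ 4 + 288 * b ^ 6 + 916 * b ^ 8 + 408 * b ^ 10 + 196 * b ^ 12)
          + ((a ^ 2 - 1) ^ 2) ^ 3 * a ^ 2 *
              (4 + 24 * b ^ 2 + 52 * b ^ 4 + 72 * b ^ 6 + 136 * b ^ 8)
          + ((a ^ 2 - 1) ^ 2) ^ 4 *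
              (1 + 6 * b ^ 2 + 9 * b ^ 4) ) := by
      subst hA hB hC
      rw [← ha, ← hb]
      ring
    rw [key]
    positivity
  -- discriminant in terms of the root r and the residual quadratic
  have key3 : 18 * A * B * C - 4 * A ^ 3 * C + A ^ 2 * B ^ 2 - 4 * B ^ 3 - 27 * C ^ 2
      = ((A + r) ^ 2 - 4 * (r ^ 2 + A * r + B)) *
        (r ^ 2 + (A + r) * r + (r ^ 2 + A * r + B)) ^ 2 := by
    linear_combination (27 * r ^ 3 + 27 * A * r ^ 2 + 27 * B * r - 27 * C
      + 18 * A * B - 4 * A ^ 3) * hr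
  have hδ : 0 ≤ (A + r) ^ 2 - 4 * (r ^ 2 + A * r + B) := by
    rcases eq_or_ne (r ^ 2 + (A + r) * r + (r ^ 2 + A * r + B)) 0 with h | h
    · nlinarith [sq_nonneg (A + 3 * r)]
    · have h2 : 0 < (r ^ 2 + (A + r) * r + (r ^ 2 + A * r + B)) ^ 2 := by positivity
      nlinarith [hΔ, key3, h2]
  set e : ℝ := Real.sqrt ((A + r) ^ 2 - 4 * (r ^ 2 + A * r + B)) with he0
  have he : e ^ 2 = (A + r) ^ 2 - 4 * (r ^ 2 + A * r + B) := Real.sq_sqrt hδ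
  refine ⟨r, (-(A + r) + e) / 2, (-(A + r) - e) / 2, fun x => ?_⟩
  linear_combination (-(x ^ 2)) * hA - x * hB - hC + hr + ((x - r) / 4) * he
end
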